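/- For the k-partite GHZ and W states (both in (ℂ²)^{⊗k}), the asymptotic SLOCC conversion rate from GHZ to W equals 1: ω(GHZ, W) = 1. Equivalently, the asymptotic rank of the k-partite W state is 2: lim_{n→∞} (1/n)·log₂ rk(W^{⊗n}) = 1. -/

import Mathlib

open scoped BigOperators

namespace Paper

def Restricts {k : ℕ} {ι κ : Fin k → Type} [∀ i, Fintype (ι i)] [∀ i, Fintype (κ i)]
    (ψ : ((i : Fin k) → ι i) → ℂ) (φ : ((i : Fin k) → κ i) → ℂ) : Prop :=
  ∃ A : (i : Fin k) → κ i → ι i → ℂ,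
    ∀ v, φ v = ∑ w : (i : Fin k) → ι i, (∏ i, A i (v i) (w i)) * ψ w

def pow {k : ℕ} {ι : Fin k → Type} (ψ : ((i : Fin k) → ι i) → ℂ) (m : ℕ) :
    ((i : Fin k) → (Fin m → ι i)) → ℂ :=
  fun v => ∏ j : Fin m, ψ (fun i => v i j)

def tprod {k : ℕ} {ι κ : Fin k → Type} (ψ : ((i : Fin k) → ι i) → ℂ)
    (φ : ((i : Fin k) → κ i) → ℂ) : ((i : Fin k) → ι i × κ i) → ℂ :=
  fun v => ψ (fun i => (v i).1) * φ (fun i => (v i).2)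

noncomputable def omegaN {k : ℕ} {ι κ : Fin k → Type} [∀ i, Fintype (ι i)] [∀ i, Fintype (κ i)]
    (ψ : ((i : Fin k) → ι i) → ℂ) (φ : ((i : Fin k) → κ i) → ℂ) (n : ℕ) : ℝ :=
  ((sInf {m : ℕ | Restricts (pow ψ m) (pow φ n)} : ℕ) : ℝ) / n

noncomputable def omega {k : ℕ} {ι κ : Fin k → Type} [∀ i, Fintype (ι i)] [∀ i, Fintype (κ i)]
    (ψ : ((i : Fin k) → ι i) → ℂ) (φ : ((i : Fin k) → κ i) → ℂ) : ℝ :=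
  ⨅ n : ℕ+, omegaN ψ φ n

def GHZ (k a : ℕ) : ((_ : Fin k) → Fin a) → ℂ :=
  fun v => if ∀ i j : Fin k, v i = v j then 1 else 0

def W (k : ℕ) : ((_ : Fin k) → Fin 2) → ℂ :=
  fun v => if (Finset.univ.filter fun i => v i = 1).card = 1 then 1 else 0

def rankLE {k : ℕ} {ι : Fin k → Type} (T : ((i : Fin k) → ι i) → ℂ) (r : ℕ) : Prop :=
  ∃ u : Fin r → (i : Fin k) → ι i → ℂ, ∀ v, T v = ∑ s : Fin r, ∏ i, u s i (v i)

noncomputable def trank {k : ℕ} {ι : Fin k → Type} (T : ((i : Fin k) → ι i) → ℂ) : ℕ :=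
  sInf {r | rankLE T r}

/-!
`GHZ^{⊗m}` restricts to a tensor exactly when that tensor has rank at most `2^m`, so the cost of
producing `W^{⊗n}` from GHZ states is `⌈log₂ rk(W^{⊗n})⌉`, and both statements reduce to
`2^n ≤ rk(W^{⊗n}) ≤ (n(k-1)+1)·2^n`.

The lower bound is the rank of the flattening of `W^{⊗n}` in which all parties but the first two
hold `|0…0⟩`: it is a permutation matrix of size `2^n`. The upper bound makes the degeneration of
GHZ to W exact. With `P(z) = (|0⟩+z|1⟩)^{⊗k} - |0⟩^{⊗k}`, a tensor of rank `2`, the tensor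
`P(z)^{⊗n}` is a polynomial in `z` whose coefficients vanish outside the degrees `n, …, nk`, and
its coefficient of `z^n` is `W^{⊗n}`. Interpolation at `n(k-1)+1` points extracts that coefficient
as a linear combination of `n(k-1)+1` tensors of rank `2^n`.
-/

open Filter Topology

section TensorRank

variable {k : ℕ} {ι : Fin k → Type}

lemma rankLE_of_fintype {S : Type} [Fintype S] {T : ((i : Fin k) → ι i) → ℂ}
    (u : S → (i : Fin k) → ι i → ℂ) (h : ∀ v, T v = ∑ s, ∏ i, u s i (v i)) :
    rankLE T (Fintype.card S) :=
  ⟨fun s => u ((Fintype.equivFin S).symm s), fun v => by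
    rw [h v, ← (Fintype.equivFin S).symm.sum_comp]⟩

lemma rankLE_zero (hk : 0 < k) (r : ℕ) : rankLE (0 : ((i : Fin k) → ι i) → ℂ) r :=
  ⟨0, fun v => by simp [hk.ne']⟩

lemma rankLE.add {T S : ((i : Fin k) → ι i) → ℂ} {r s : ℕ} (hT : rankLE T r)
    (hS : rankLE S s) : rankLE (T + S) (r + s) := by
  obtain ⟨u, hu⟩ := hT
  obtain ⟨w, hw⟩ := hS
  simpa using rankLE_of_fintype (Sum.elim u w) fun v => by
    simp [Fintype.sum_sum_type, hu v, hw v]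

lemma rankLE.mono (hk : 0 < k) {T : ((i : Fin k) → ι i) → ℂ} {r s : ℕ} (hT : rankLE T r)
    (hrs : r ≤ s) : rankLE T s := by
  simpa [Nat.add_sub_cancel' hrs] using hT.add (rankLE_zero hk (s - r))

lemma rankLE.smul (hk : 0 < k) {T : ((i : Fin k) → ι i) → ℂ} {r : ℕ} (hT : rankLE T r)
    (c : ℂ) : rankLE (c • T) r := by
  obtain ⟨u, hu⟩ := hT
  refine ⟨fun s i x => (if i = ⟨0, hk⟩ then c else 1) * u s i x, fun v => ?_⟩
  simp only [Pi.smul_apply, smul_eq_mul, hu v, Finset.mul_sum, Finset.prod_mul_distrib,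
    Finset.prod_ite_eq', Finset.mem_univ, if_true]

lemma rankLE.sub (hk : 0 < k) {T S : ((i : Fin k) → ι i) → ℂ} {r s : ℕ} (hT : rankLE T r)
    (hS : rankLE S s) : rankLE (T - S) (r + s) := by
  simpa [sub_eq_add_neg] using hT.add (hS.smul hk (-1))

lemma rankLE_sum {β : Type} [Fintype β] {T : β → ((i : Fin k) → ι i) → ℂ} {r : ℕ}
    (hT : ∀ t, rankLE (T t) r) : rankLE (∑ t, T t) (Fintype.card β * r) := by
  choose u hu using hT
  simpa using rankLE_of_fintype (fun p : β × Fin r => u p.1 p.2) fun v => by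
    simp [Fintype.sum_prod_type, hu _ v]

lemma rankLE.pow {T : ((i : Fin k) → ι i) → ℂ} {r : ℕ} (hT : rankLE T r) (n : ℕ) :
    rankLE (pow T n) (r ^ n) := by
  obtain ⟨u, hu⟩ := hT
  simpa using rankLE_of_fintype (fun (σ : Fin n → Fin r) i x => ∏ j, u (σ j) i (x j))
    fun v => by
      simp only [Paper.pow, hu, Finset.prod_univ_sum]
      exact Finset.sum_congr rfl fun σ _ => Finset.prod_comm

lemma Restricts.rankLE [∀ i, Fintype (ι i)] {κ : Fin k → Type} [∀ i, Fintype (κ i)]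
    {ψ : ((i : Fin k) → ι i) → ℂ} {φ : ((i : Fin k) → κ i) → ℂ} (h : Restricts ψ φ) {r : ℕ}
    (hψ : rankLE ψ r) : rankLE φ r := by
  obtain ⟨A, hA⟩ := h
  obtain ⟨u, hu⟩ := hψ
  refine ⟨fun s i x => ∑ y, A i x y * u s i y, fun v => ?_⟩
  simp_rw [hA v, hu, Finset.mul_sum, Finset.prod_univ_sum, ← Finset.prod_mul_distrib]
  exact Finset.sum_comm

lemma trank_le {T : ((i : Fin k) → ι i) → ℂ} {r : ℕ} (h : rankLE T r) : trank T ≤ r :=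
  Nat.sInf_le h

lemma rankLE_trank {T : ((i : Fin k) → ι i) → ℂ} {r : ℕ} (h : rankLE T r) :
    rankLE T (trank T) :=
  Nat.sInf_mem (s := {r | rankLE T r}) ⟨r, h⟩

lemma rankLE.rank_flattening_le {ι : Fin (k + 1) → Type} [Fintype (ι 0)]
    {T : ((i : Fin (k + 1)) → ι i) → ℂ} {r : ℕ} (hT : rankLE T r) {β : Type} [Fintype β]
    (f : β → (i : Fin k) → ι i.succ) :
    (Matrix.of fun a b => T (Fin.cons a (f b))).rank ≤ r := by
  obtain ⟨u, hu⟩ := hT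
  have hfactor : Matrix.of (fun a b => T (Fin.cons a (f b))) =
      Matrix.of (fun a s => u s 0 a) * Matrix.of (fun s b => ∏ i : Fin k, u s i.succ (f b i)) := by
    ext a b
    simp [Matrix.mul_apply, hu, Fin.prod_univ_succ]
  rw [hfactor]
  exact (Matrix.rank_mul_le_left _ _).trans ((Matrix.rank_le_card_width _).trans (by simp))

end TensorRank

section GHZ

variable {k : ℕ}

lemma pow_GHZ_eq_sum (hk : 0 < k) (a m : ℕ) (v : Fin k → Fin m → Fin a) :
    pow (GHZ k a) m v = ∑ c : Fin m → Fin a, ∏ i, if v i = c then 1 else 0 := by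
  have hdiag : (∀ j (i i' : Fin k), v i j = v i' j) ↔ ∀ i, v i = v ⟨0, hk⟩ :=
    ⟨fun h i => funext fun j => h j i _, fun h j i i' => by rw [h i, h i']⟩
  simp only [Paper.pow, GHZ, Fintype.prod_boole, hdiag]
  convert (Fintype.sum_eq_single (f := fun c => if ∀ i, v i = c then (1 : ℂ) else 0) (v ⟨0, hk⟩)
    fun c hc => if_neg fun h => hc (h ⟨0, hk⟩).symm).symm

lemma rankLE_pow_GHZ (hk : 0 < k) (a m : ℕ) : rankLE (pow (GHZ k a) m) (a ^ m) := by
  have h := rankLE_of_fintype (T := pow (GHZ k a) m)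
    (fun c (_ : Fin k) x => if x = c then (1 : ℂ) else 0) (pow_GHZ_eq_sum hk a m)
  rwa [Fintype.card_fun, Fintype.card_fin, Fintype.card_fin] at h

lemma restricts_pow_GHZ_iff (hk : 0 < k) (a m : ℕ) {κ : Fin k → Type} [∀ i, Fintype (κ i)]
    {φ : ((i : Fin k) → κ i) → ℂ} : Restricts (pow (GHZ k a) m) φ ↔ rankLE φ (a ^ m) := by
  refine ⟨fun h => h.rankLE (rankLE_pow_GHZ hk a m), fun ⟨u, hu⟩ => ?_⟩
  let e : (Fin m → Fin a) ≃ Fin (a ^ m) := finFunctionFinEquiv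
  refine ⟨fun i x c => u (e c) i x, fun v => ?_⟩
  calc φ v = ∑ c, ∏ i, u (e c) i (v i) := by rw [hu v, e.sum_comp (fun s => ∏ i, u s i (v i))]
    _ = ∑ c, ∏ i, ∑ y, u (e y) i (v i) * if y = c then 1 else 0 := by simp
    _ = _ := by
      simp_rw [Fintype.prod_sum, pow_GHZ_eq_sum hk, Finset.mul_sum, Finset.prod_mul_distrib]
      exact Finset.sum_comm

lemma sInf_restricts_pow_GHZ (hk : 0 < k) {a : ℕ} (ha : 1 < a) {κ : Fin k → Type}
    [∀ i, Fintype (κ i)] {φ : ((i : Fin k) → κ i) → ℂ} {r : ℕ} (hφ : rankLE φ r) :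
    sInf {m | Restricts (pow (GHZ k a) m) φ} = Nat.clog a (trank φ) := by
  have hset : {m | Restricts (pow (GHZ k a) m) φ} = Set.Ici (Nat.clog a (trank φ)) := by
    refine Set.ext fun m => ?_
    change Restricts _ _ ↔ _ ≤ m
    rw [restricts_pow_GHZ_iff hk, Nat.clog_le_iff_le_pow ha]
    exact ⟨trank_le, (rankLE_trank hφ).mono hk⟩
  rw [hset, csInf_Ici]

end GHZ

section Interpolation

lemma exists_sum_mul_pow_eq {K : Type} [Field K] {D : ℕ} {x : Fin D → K}
    (hx : Function.Injective x) (y : Fin D → K) :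
    ∃ c : Fin D → K, ∀ d : Fin D, ∑ t, c t * x t ^ (d : ℕ) = y d := by
  have hV : IsUnit (Matrix.vandermonde x) := (Matrix.isUnit_iff_isUnit_det _).2
    (isUnit_iff_ne_zero.2 (Matrix.det_vandermonde_ne_zero_iff.2 hx))
  obtain ⟨c, hc⟩ := Matrix.vecMul_surjective_iff_isUnit.2 hV y
  exact ⟨c, fun d => by simpa [Matrix.vecMul, dotProduct] using congrFun hc d⟩

lemma exists_sum_mul_pow_eq_ite (n D : ℕ) : ∃ c x : Fin D → ℂ,
    ∀ N, n ≤ N → N < n + D → ∑ t, c t * x t ^ N = if N = n then 1 else 0 := by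
  have hx : Function.Injective fun t : Fin D => (t : ℂ) + 1 := fun s t h =>
    Fin.ext (by exact_mod_cast add_right_cancel h)
  obtain ⟨c, hc⟩ := exists_sum_mul_pow_eq hx fun d => if (d : ℕ) = 0 then 1 else 0
  refine ⟨fun t => c t / ((t : ℂ) + 1) ^ n, fun t => (t : ℂ) + 1, fun N hnN hND => ?_⟩
  obtain ⟨d, rfl⟩ := Nat.exists_eq_add_of_le hnN
  have hshift : ∀ t : Fin D, c t / ((t : ℂ) + 1) ^ n * ((t : ℂ) + 1) ^ (n + d)
      = c t * ((t : ℂ) + 1) ^ d := fun t => by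
    have : ((t : ℂ) + 1) ≠ 0 := by norm_cast
    rw [pow_add]
    field_simp
  simpa [hshift] using hc ⟨d, by omega⟩

lemma sum_mul_prod_pow_sub_zero_pow {n k D : ℕ} {c x : Fin D → ℂ}
    (hc : ∀ N, n ≤ N → N ≤ n * k → ∑ t, c t * x t ^ N = if N = n then 1 else 0)
    {w : Fin n → ℕ} (hw : ∀ j, w j ≤ k) :
    ∑ t, c t * ∏ j, (x t ^ w j - 0 ^ w j) = ∏ j, if w j = 1 then 1 else 0 := by
  by_cases hzero : ∃ j, w j = 0
  · obtain ⟨j, hj⟩ := hzero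
    simp [Finset.prod_eq_zero (Finset.mem_univ j), hj]
  simp only [not_exists] at hzero
  have hpos : ∀ j, 1 ≤ w j := fun j => Nat.one_le_iff_ne_zero.2 (hzero j)
  have hsum : n ≤ ∑ j, w j ∧ ∑ j, w j ≤ n * k := by
    constructor
    · simpa using Finset.sum_le_sum fun j (_ : j ∈ Finset.univ) => hpos j
    · simpa [mul_comm] using Finset.sum_le_sum fun j (_ : j ∈ Finset.univ) => hw j
  have hone : ∑ j, w j = n ↔ ∀ j, w j = 1 := by
    simpa [eq_comm] using Finset.sum_eq_sum_iff_of_le fun j (_ : j ∈ Finset.univ) => hpos j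
  simp_rw [zero_pow (hzero _), sub_zero, Finset.prod_pow_eq_pow_sum, hc _ hsum.1 hsum.2,
    Fintype.prod_boole]
  convert if_congr hone rfl rfl

end Interpolation

section WUpperBound

variable {k : ℕ}

/-- The product state `(|0⟩ + z|1⟩)^{⊗k}`. -/
def prodState (k : ℕ) (z : ℂ) : (Fin k → Fin 2) → ℂ :=
  fun v => ∏ i, if v i = 1 then z else 1

lemma prodState_apply (z : ℂ) (v : Fin k → Fin 2) :
    prodState k z v = z ^ (Finset.univ.filter fun i => v i = 1).card := by
  simp [prodState, Finset.prod_ite]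

lemma rankLE_prodState (z : ℂ) : rankLE (prodState k z) 1 :=
  ⟨fun _ _ y => if y = 1 then z else 1, fun v => by simp [prodState]⟩

lemma rankLE_pow_W (hk : 0 < k) (n : ℕ) :
    rankLE (pow (W k) n) ((n * (k - 1) + 1) * 2 ^ n) := by
  obtain ⟨c, x, hc⟩ := exists_sum_mul_pow_eq_ite n (n * (k - 1) + 1)
  have hnk : n * k = n * (k - 1) + n := by
    rw [← Nat.mul_succ, Nat.succ_eq_add_one, Nat.sub_add_cancel hk]
  have hW : pow (W k) n = ∑ t, c t • pow (prodState k (x t) - prodState k 0) n := by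
    funext v
    simp only [Finset.sum_apply, Pi.smul_apply, smul_eq_mul, Paper.pow, Pi.sub_apply,
      prodState_apply]
    exact (sum_mul_prod_pow_sub_zero_pow (k := k) (fun N hnN hNk => hc N hnN (by omega))
      fun j => (Finset.card_filter_le _ _).trans (by simp)).symm
  rw [hW]
  simpa using rankLE_sum fun t =>
    (((rankLE_prodState (x t)).sub hk (rankLE_prodState 0)).pow n).smul hk (c t)

lemma trank_pow_W_le (hk : 0 < k) (n : ℕ) :
    (trank (pow (W k) n) : ℝ) ≤ ((n : ℝ) + 1) ^ (k - 1) * 2 ^ n := by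
  have hbernoulli : (n : ℝ) * (k - 1 : ℕ) + 1 ≤ ((n : ℝ) + 1) ^ (k - 1) := by
    simpa [add_comm, mul_comm] using
      one_add_mul_le_pow (by linarith [n.cast_nonneg (α := ℝ)] : (-2 : ℝ) ≤ n) (k - 1)
  calc (trank (pow (W k) n) : ℝ) ≤ ((n * (k - 1) + 1) * 2 ^ n : ℕ) := by
        exact_mod_cast trank_le (rankLE_pow_W hk n)
    _ ≤ ((n : ℝ) + 1) ^ (k - 1) * 2 ^ n := by
        push_cast
        gcongr

end WUpperBound

section WLowerBound

variable {k : ℕ}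

lemma W_cons_cons_zero (x y : Fin 2) :
    W (k + 2) (Fin.cons x (Fin.cons y 0)) = if x ≠ y then 1 else 0 := by
  simp only [W, Finset.card_filter, Fin.sum_univ_succ, Fin.cons_zero, Fin.cons_succ,
    Pi.zero_apply]
  fin_cases x <;> fin_cases y <;> simp

lemma two_pow_le_of_rankLE_pow_W {n r : ℕ} (h : rankLE (pow (W (k + 2)) n) r) : 2 ^ n ≤ r := by
  let f : (Fin n → Fin 2) → (i : Fin (k + 1)) → Fin n → Fin 2 :=
    fun b => Fin.cons (Fin.rev ∘ b) 0
  have hid : Matrix.of (fun a b => pow (W (k + 2)) n (Fin.cons a (f b))) = 1 := by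
    ext a b
    have hslice : ∀ j, (fun i => (Fin.cons a (f b) : (i : Fin (k + 2)) → Fin n → Fin 2) i j) =
        Fin.cons (a j) (Fin.cons (Fin.rev (b j)) 0) := fun j => by
      ext i
      exact Fin.cases rfl (Fin.cases rfl fun _ => rfl) i
    have hrev : ∀ x y : Fin 2, x ≠ Fin.rev y ↔ x = y := by decide
    simp [Paper.pow, hslice, W_cons_cons_zero, hrev, Fintype.prod_boole, Matrix.one_apply,
      funext_iff]
  simpa [hid, Matrix.rank_one] using h.rank_flattening_le f

lemma two_pow_le_trank_pow_W (hk : 2 ≤ k) (n : ℕ) : 2 ^ n ≤ trank (pow (W k) n) := by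
  obtain ⟨k, rfl⟩ := Nat.exists_eq_add_of_le' hk
  exact two_pow_le_of_rankLE_pow_W (rankLE_trank (rankLE_pow_W (by omega) n))

end WLowerBound

section Asymptotics

lemma tendsto_logb_div_of_pow_le_of_le {b : ℝ} (hb : 1 < b) {R : ℕ → ℝ} (K : ℕ)
    (hlo : ∀ n, b ^ n ≤ R n) (hhi : ∀ n, R n ≤ ((n : ℝ) + 1) ^ K * b ^ n) :
    Tendsto (fun n => Real.logb b (R n) / n) atTop (𝓝 1) := by
  have hlog : Tendsto (fun n : ℕ => Real.logb b ((n : ℝ) + 1) / n) atTop (𝓝 0) := by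
    simpa [Function.comp_def] using
      (Real.tendsto_pow_logb_div_mul_add_atTop (b := b) 1 (-1) 1 one_ne_zero).comp
        (tendsto_atTop_add_const_right _ 1 tendsto_natCast_atTop_atTop)
  have hupper : Tendsto (fun n : ℕ => 1 + K * (Real.logb b ((n : ℝ) + 1) / n)) atTop (𝓝 1) := by
    simpa using (hlog.const_mul (K : ℝ)).const_add 1
  refine tendsto_of_tendsto_of_tendsto_of_le_of_le' tendsto_const_nhds hupper ?_ ?_
  all_goals
    filter_upwards [eventually_gt_atTop 0] with n hn
    have hn' : (0 : ℝ) < n := by exact_mod_cast hn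
  · rw [le_div_iff₀ hn', one_mul]
    simpa [Real.logb_pow, Real.logb_self_eq_one hb] using
      Real.logb_le_logb_of_le hb (by positivity) (hlo n)
  · have hRpos : 0 < R n := (pow_pos (by linarith) n).trans_le (hlo n)
    have := Real.logb_le_logb_of_le hb hRpos (hhi n)
    rw [Real.logb_mul (by positivity) (by positivity), Real.logb_pow, Real.logb_pow,
      Real.logb_self_eq_one hb] at this
    rw [div_le_iff₀ hn']
    field_simp
    linarith

lemma tendsto_clog_div_of_tendsto_logb_div {b : ℕ} {R : ℕ → ℕ} {a : ℝ}
    (h : Tendsto (fun n => Real.logb b (R n) / n) atTop (𝓝 a)) :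
    Tendsto (fun n => (Nat.clog b (R n) : ℝ) / n) atTop (𝓝 a) := by
  have hupper : Tendsto (fun n : ℕ => Real.logb b (R n) / n + 1 / n) atTop (𝓝 a) := by
    simpa using h.add tendsto_one_div_atTop_nhds_zero_nat
  refine tendsto_of_tendsto_of_tendsto_of_le_of_le h hupper (fun n => ?_) fun n => ?_
  all_goals rw [← Real.natCeil_logb_natCast]
  · exact div_le_div_of_nonneg_right (Nat.le_ceil _) n.cast_nonneg
  · have hlog : 0 ≤ Real.logb b (R n) :=
      div_nonneg (Real.log_natCast_nonneg _) (Real.log_natCast_nonneg _)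
    rw [← add_div]
    exact div_le_div_of_nonneg_right (Nat.ceil_lt_add_one hlog).le n.cast_nonneg

lemma iInf_pnat_eq_of_tendsto {f : ℕ → ℝ} {a : ℝ} (hle : ∀ n : ℕ+, a ≤ f n)
    (hf : Tendsto f atTop (𝓝 a)) : ⨅ n : ℕ+, f n = a := by
  have hbdd : BddBelow (Set.range fun n : ℕ+ => f n) := ⟨a, Set.forall_mem_range.2 hle⟩
  refine le_antisymm (ge_of_tendsto hf ?_) (le_ciInf hle)
  filter_upwards [eventually_gt_atTop 0] with n hn using ciInf_le hbdd ⟨n, hn⟩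

end Asymptotics

/-- ω(GHZ,W) = 1 for the k-partite GHZ and W states; equivalently the asymptotic
rank of the k-partite W state is 2. -/
theorem omega_GHZ_W (k : ℕ) (hk : 2 ≤ k) :
    omega (GHZ k 2) (W k) = 1 ∧
    Filter.Tendsto (fun n : ℕ => Real.logb 2 (trank (pow (W k) n)) / n)
      Filter.atTop (nhds 1) := by
  have hk0 : 0 < k := by omega
  have hrate : Tendsto (fun n : ℕ => Real.logb 2 (trank (pow (W k) n)) / n) atTop (𝓝 1) :=
    tendsto_logb_div_of_pow_le_of_le one_lt_two (k - 1)
      (fun n => by exact_mod_cast two_pow_le_trank_pow_W hk n) (trank_pow_W_le hk0)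
  refine ⟨?_, hrate⟩
  have homegaN : ∀ n, omegaN (GHZ k 2) (W k) n = (Nat.clog 2 (trank (pow (W k) n)) : ℝ) / n :=
    fun n => by rw [omegaN, sInf_restricts_pow_GHZ hk0 one_lt_two (rankLE_pow_W hk0 n)]
  have homega : omega (GHZ k 2) (W k) =
      ⨅ n : ℕ+, (Nat.clog 2 (trank (pow (W k) n)) : ℝ) / (n : ℕ) := by
    simp only [omega, homegaN]
  have hcost : Tendsto (fun n : ℕ => (Nat.clog 2 (trank (pow (W k) n)) : ℝ) / n) atTop (𝓝 1) :=
    tendsto_clog_div_of_tendsto_logb_div (by exact_mod_cast hrate)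
  rw [homega]
  refine iInf_pnat_eq_of_tendsto (fun n => ?_) hcost
  have hclog : (n : ℕ) ≤ Nat.clog 2 (trank (pow (W k) n)) := by
    simpa [Nat.clog_pow 2 _ one_lt_two] using
      Nat.clog_mono_right 2 (two_pow_le_trank_pow_W hk n)
  have hn : (0 : ℝ) < (n : ℕ) := by exact_mod_cast n.pos
  rw [le_div_iff₀ hn, one_mul]
  exact_mod_cast hclog

end Paper
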